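/- arXiv:2307.06198 — 2 statements merged into one kernel-verified Lean document; each statement's English description precedes it below -/
import Mathlib

section
/- Let u: ℝ^N → ℝ satisfy ∫_{ℝ^N} |u(y)|(1+|y|)^{-N}(ln(e+|y|))^{m-1} dy < ∞, and let v: ℝ^N → ℝ be measurable with |v(x)| ≤ C(1+|x|)^{-N}(ln(e+|x|))^{m-1}. Then for every compact set 𝒪 ⊂ ℝ^N there is a constant C_𝒪 such that |(v * u)(x)| ≤ C_𝒪 ‖u‖_{L¹_{0,m}} for all x ∈ 𝒪; in particular the convolution v * u is well-defined and finite everywhere. -/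
open Real MeasureTheory

private lemma log_ge_one' (t : ℝ) (ht : 0 ≤ t) : 1 ≤ Real.log (Real.exp 1 + t) := by
  have h := Real.log_le_log (Real.exp_pos 1) (by linarith : Real.exp 1 ≤ Real.exp 1 + t)
  simpa [Real.log_exp] using h

private lemma weight_key' (N m : ℕ) (R : ℝ) (hR : 0 ≤ R)
    (x y : EuclideanSpace ℝ (Fin N)) (hx : ‖x‖ ≤ R) :
    (1 + ‖x - y‖) ^ (-(N:ℝ)) * (Real.log (Real.exp 1 + ‖x - y‖)) ^ (m-1) ≤
    ((1+R)^N * (1 + Real.log (1+R))^(m-1)) *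
      ((1 + ‖y‖) ^ (-(N:ℝ)) * (Real.log (Real.exp 1 + ‖y‖)) ^ (m-1)) := by
  set a := ‖x - y‖ with ha
  set b := ‖y‖ with hb
  have ha0 : 0 ≤ a := norm_nonneg _
  have hb0 : 0 ≤ b := norm_nonneg _
  have hya : b ≤ R + a := by
    calc b = ‖x - (x - y)‖ := by rw [sub_sub_cancel]
      _ ≤ ‖x‖ + ‖x - y‖ := norm_sub_le _ _
      _ ≤ R + a := by rw [← ha]; linarith
  have hay : a ≤ R + b := by
    have := norm_sub_le x y
    rw [← ha, ← hb] at this; linarith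
  have hA : (1+a)^(-(N:ℝ)) ≤ (1+R)^N * (1+b)^(-(N:ℝ)) := by
    have h1 : (0:ℝ) < 1 + a := by linarith
    have h2 : (0:ℝ) < 1 + b := by linarith
    rw [Real.rpow_neg h1.le, Real.rpow_neg h2.le, Real.rpow_natCast, Real.rpow_natCast,
      inv_eq_one_div, inv_eq_one_div, mul_one_div, div_le_div_iff₀ (by positivity) (by positivity)]
    calc 1 * (1+b)^N = (1+b)^N := one_mul _
      _ ≤ ((1+R)*(1+a))^N := by
          apply pow_le_pow_left₀ h2.le
          nlinarith
      _ = (1+R)^N * (1+a)^N := mul_pow _ _ _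
  have hL1 : 1 ≤ Real.log (Real.exp 1 + b) := log_ge_one' b hb0
  have hLa : 0 ≤ Real.log (Real.exp 1 + a) :=
    le_trans (by norm_num) (log_ge_one' a ha0)
  have hlogR : 0 ≤ Real.log (1+R) := Real.log_nonneg (by linarith)
  have hB : Real.log (Real.exp 1 + a) ≤ (1 + Real.log (1+R)) * Real.log (Real.exp 1 + b) := by
    have he : (1:ℝ) ≤ Real.exp 1 := Real.one_le_exp (by norm_num)
    have h3 : Real.exp 1 + a ≤ (1+R) * (Real.exp 1 + b) := by nlinarith
    have h4 : Real.log (Real.exp 1 + a) ≤ Real.log ((1+R) * (Real.exp 1 + b)) :=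
      Real.log_le_log (by positivity) h3
    rw [Real.log_mul (by positivity) (by positivity)] at h4
    nlinarith
  have hBpow : (Real.log (Real.exp 1 + a))^(m-1) ≤
      ((1 + Real.log (1+R)) * Real.log (Real.exp 1 + b))^(m-1) :=
    pow_le_pow_left₀ hLa hB _
  calc (1+a)^(-(N:ℝ)) * (Real.log (Real.exp 1 + a))^(m-1)
      ≤ ((1+R)^N * (1+b)^(-(N:ℝ))) * (((1 + Real.log (1+R)) * Real.log (Real.exp 1 + b))^(m-1)) := by
        apply mul_le_mul hA hBpow (pow_nonneg hLa _) (by positivity)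
    _ = ((1+R)^N * (1 + Real.log (1+R))^(m-1)) *
          ((1+b)^(-(N:ℝ)) * (Real.log (Real.exp 1 + b))^(m-1)) := by
        rw [mul_pow]; ring

theorem convolution_locally_bounded (N m : ℕ) (hm : 1 ≤ m)
    (u v : EuclideanSpace ℝ (Fin N) → ℝ)
    (humeas : Measurable u) (hvmeas : Measurable v)
    (hu : Integrable (fun y : EuclideanSpace ℝ (Fin N) =>
        |u y| * (1 + ‖y‖) ^ (-(N:ℝ)) * (Real.log (Real.exp 1 + ‖y‖)) ^ (m-1)))
    (C : ℝ)
    (hv : ∀ x, |v x| ≤ C * (1 + ‖x‖) ^ (-(N:ℝ)) * (Real.log (Real.exp 1 + ‖x‖)) ^ (m-1)) :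
    ∀ K : Set (EuclideanSpace ℝ (Fin N)), IsCompact K →
      ∃ C' : ℝ, ∀ x ∈ K,
        Integrable (fun y => v (x - y) * u y) ∧
        |∫ y, v (x - y) * u y| ≤
          C' * ∫ y, |u y| * (1 + ‖y‖) ^ (-(N:ℝ)) * (Real.log (Real.exp 1 + ‖y‖)) ^ (m-1) := by
  intro K hK
  obtain ⟨R, hR0, hR⟩ : ∃ R : ℝ, 0 ≤ R ∧ ∀ x ∈ K, ‖x‖ ≤ R := by
    obtain ⟨R, hR⟩ := hK.isBounded.exists_norm_le
    exact ⟨max R 0, le_max_right _ _, fun x hx => (hR x hx).trans (le_max_left _ _)⟩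
  have hC : 0 ≤ C := by
    have h := (abs_nonneg (v 0)).trans (hv 0)
    simpa [Real.log_exp, Real.one_rpow] using h
  set c : ℝ := (1+R)^N * (1 + Real.log (1+R))^(m-1) with hcdef
  have hc0 : 0 ≤ c := by
    have : 0 ≤ Real.log (1+R) := Real.log_nonneg (by linarith)
    positivity
  refine ⟨C * c, fun x hx => ?_⟩
  have hxR := hR x hx
  have hmeas : AEStronglyMeasurable (fun y : EuclideanSpace ℝ (Fin N) => v (x - y) * u y) volume :=
    ((hvmeas.comp (measurable_const.sub measurable_id)).mul humeas).aestronglyMeasurable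
  have hbound : ∀ y, ‖v (x - y) * u y‖ ≤
      (C * c) * (|u y| * (1 + ‖y‖) ^ (-(N:ℝ)) * (Real.log (Real.exp 1 + ‖y‖)) ^ (m-1)) := by
    intro y
    rw [norm_mul, Real.norm_eq_abs, Real.norm_eq_abs]
    have h1 : |v (x-y)| ≤ C * ((1+‖x-y‖)^(-(N:ℝ)) * (Real.log (Real.exp 1 + ‖x-y‖))^(m-1)) := by
      have := hv (x-y); rw [mul_assoc] at this; exact this
    have h2 := weight_key' N m R hR0 x y hxR
    calc |v (x-y)| * |u y|
        ≤ (C * (c * ((1+‖y‖)^(-(N:ℝ)) * (Real.log (Real.exp 1 + ‖y‖))^(m-1)))) * |u y| := by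
          apply mul_le_mul_of_nonneg_right _ (abs_nonneg _)
          exact h1.trans (mul_le_mul_of_nonneg_left h2 hC)
      _ = (C*c) * (|u y| * (1+‖y‖)^(-(N:ℝ)) * (Real.log (Real.exp 1 + ‖y‖))^(m-1)) := by ring
  have hint : Integrable (fun y => v (x - y) * u y) volume :=
    Integrable.mono' (hu.const_mul (C*c)) hmeas (Filter.Eventually.of_forall hbound)
  refine ⟨hint, ?_⟩
  calc |∫ y, v (x-y) * u y| ≤ ∫ y, ‖v (x-y) * u y‖ := by
        simpa using norm_integral_le_integral_norm (fun y => v (x-y) * u y)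
    _ ≤ ∫ y, (C*c) * (|u y| * (1+‖y‖)^(-(N:ℝ)) * (Real.log (Real.exp 1 + ‖y‖))^(m-1)) :=
        integral_mono hint.norm (hu.const_mul _) hbound
    _ = (C*c) * ∫ y, |u y| * (1+‖y‖)^(-(N:ℝ)) * (Real.log (Real.exp 1 + ‖y‖))^(m-1) :=
        integral_const_mul _ _
end

section
/- Let m ≥ 1, Ω ⊂ ℝ^N open, x ∈ ℝ^N, and u: ℝ^N → ℝ measurable with modulus of continuity ω(r) = sup_{|y-x|≤r}|u(y)-u(x)| satisfying ∫₀¹ (ω(r)/r)(1 - ln r)^{m-1} dr < ∞, and suppose ∫ |u(y)|(1+|y|)^{-N}(ln(e+|y|))^{m-1} dy < ∞. Then the integral ∫_{ℝ^N} (u(x)1_{B₁(x)}(y) - u(y)) |x-y|^{-N} (-2 ln|x-y|)^{m-1} dy converges absolutely. -/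
open Real MeasureTheory Set
open scoped ENNReal NNReal

lemma lintegral_norm_polar {N : ℕ} (hN : 1 ≤ N) (g : ℝ → ℝ≥0∞) (hg : Measurable g) :
    ∫⁻ y : EuclideanSpace ℝ (Fin N), g ‖y‖ =
      (volume : Measure (EuclideanSpace ℝ (Fin N))).toSphere Set.univ *
        ∫⁻ r in Set.Ioi (0:ℝ), ENNReal.ofReal (r ^ (N - 1)) * g r := by
  haveI : NeZero N := ⟨by omega⟩
  haveI : Nontrivial (EuclideanSpace ℝ (Fin N)) := by infer_instance
  set E := EuclideanSpace ℝ (Fin N)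
  set μ : Measure E := volume with hμ
  have hdim : Module.finrank ℝ E = N := finrank_euclideanSpace_fin
  calc ∫⁻ y, g ‖y‖ ∂μ
      = ∫⁻ y in ({0}ᶜ : Set E), g ‖y‖ ∂μ := by
        rw [restrict_compl_singleton]
    _ = ∫⁻ z : ({0}ᶜ : Set E), g ‖z.1‖ ∂(μ.comap Subtype.val) :=
        (lintegral_subtype_comap (measurableSet_singleton 0).compl _).symm
    _ = ∫⁻ p : Metric.sphere (0:E) 1 × Set.Ioi (0:ℝ), g p.2.1
          ∂(μ.toSphere.prod (Measure.volumeIoiPow (Module.finrank ℝ E - 1))) := by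
        rw [← (μ.measurePreserving_homeomorphUnitSphereProd).lintegral_comp_emb
          (Homeomorph.measurableEmbedding _) (fun p => g p.2.1)]
        simp
    _ = μ.toSphere Set.univ *
          ∫⁻ r : Set.Ioi (0:ℝ), g r.1 ∂(Measure.volumeIoiPow (Module.finrank ℝ E - 1)) := by
        have hmeas : Measurable fun p : Metric.sphere (0:E) 1 × Set.Ioi (0:ℝ) => g p.2.1 :=
          hg.comp (measurable_subtype_coe.comp measurable_snd)
        rw [MeasureTheory.lintegral_prod _ hmeas.aemeasurable]
        simp [lintegral_const, mul_comm]
    _ = μ.toSphere Set.univ * ∫⁻ r in Set.Ioi (0:ℝ), ENNReal.ofReal (r ^ (N - 1)) * g r := by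
        congr 1
        rw [Measure.volumeIoiPow,
          lintegral_withDensity_eq_lintegral_mul _
            (show Measurable fun r : Set.Ioi (0:ℝ) =>
                ENNReal.ofReal (r.1 ^ (Module.finrank ℝ E - 1)) from
              (measurable_subtype_coe.pow_const _).ennreal_ofReal)
            (show Measurable fun r : Set.Ioi (0:ℝ) => g r.1 from
              hg.comp measurable_subtype_coe)]
        rw [hdim, ← lintegral_subtype_comap measurableSet_Ioi
          (fun r => ENNReal.ofReal (r ^ (N - 1)) * g r)]
        rfl


lemma norm_preimage_null {N : ℕ} (hN : 1 ≤ N) {s : Set ℝ} (hsm : MeasurableSet s)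
    (hs : volume (s ∩ Set.Ioi 0) = 0) :
    volume {y : EuclideanSpace ℝ (Fin N) | ‖y‖ ∈ s} = 0 := by
  have h1 : volume {y : EuclideanSpace ℝ (Fin N) | ‖y‖ ∈ s} =
      ∫⁻ y : EuclideanSpace ℝ (Fin N), s.indicator (fun _ => (1:ℝ≥0∞)) ‖y‖ := by
    rw [← lintegral_indicator_one (s := {y : EuclideanSpace ℝ (Fin N) | ‖y‖ ∈ s})
      (measurable_norm hsm)]
    apply lintegral_congr
    intro y
    by_cases h : ‖y‖ ∈ s <;> simp [h]
  rw [h1, lintegral_norm_polar hN (s.indicator (fun _ => (1:ℝ≥0∞))) (measurable_const.indicator hsm)]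
  have h2 : (∫⁻ r in Set.Ioi (0:ℝ),
      ENNReal.ofReal (r ^ (N - 1)) * s.indicator (fun _ => (1:ℝ≥0∞)) r) = 0 := by
    refine le_antisymm (le_trans (lintegral_mono (g := s.indicator (fun _ => (⊤:ℝ≥0∞))) ?_) ?_)
      (zero_le)
    · intro r
      by_cases h : r ∈ s <;> simp [h, le_top]
    · rw [lintegral_indicator hsm, setLIntegral_const, Measure.restrict_apply hsm, hs,
        mul_zero]
  rw [h2, mul_zero]

theorem Km_well_defined_pointwise (N m : ℕ) (hm : 1 ≤ m)
    (x : EuclideanSpace ℝ (Fin N))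
    (u : EuclideanSpace ℝ (Fin N) → ℝ) (humeas : Measurable u)
    (ω : ℝ → ℝ)
    (hω : ∀ r > 0, ∀ y, dist y x ≤ r → |u y - u x| ≤ ω r)
    (hDini : IntegrableOn (fun r : ℝ => ω r / r * (1 - Real.log r) ^ (m-1)) (Set.Ioc 0 1))
    (hL1 : Integrable (fun y : EuclideanSpace ℝ (Fin N) =>
        |u y| * (1 + ‖y‖) ^ (-(N:ℝ)) * (Real.log (Real.exp 1 + ‖y‖)) ^ (m-1))) :
    Integrable (fun y : EuclideanSpace ℝ (Fin N) =>
      ((Metric.ball x 1).indicator (fun _ => u x) y - u y) *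
        ‖x - y‖ ^ (-(N:ℝ)) * (-2 * Real.log ‖x - y‖) ^ (m-1)) := by
  set f : EuclideanSpace ℝ (Fin N) → ℝ := fun y =>
    ((Metric.ball x 1).indicator (fun _ => u x) y - u y) *
      ‖x - y‖ ^ (-(N:ℝ)) * (-2 * Real.log ‖x - y‖) ^ (m-1) with hf
  -- trivial case N = 0
  rcases Nat.eq_zero_or_pos N with hN | hN
  · subst hN
    haveI : Subsingleton (EuclideanSpace ℝ (Fin 0)) := by
      constructor; intro a b; ext i; exact absurd i.2 (by omega)
    have huniv : (Set.univ : Set (EuclideanSpace ℝ (Fin 0))) = {0} := by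
      ext y; simp [Subsingleton.elim y 0]
    haveI : IsFiniteMeasure (volume : Measure (EuclideanSpace ℝ (Fin 0))) :=
      ⟨by rw [huniv]; exact isCompact_singleton.measure_lt_top⟩
    exact (integrable_congr (Filter.Eventually.of_forall fun y => by
      rw [Subsingleton.elim y x])).2 (integrable_const (f x))
  -- measurability of f
  have hfm : Measurable f := by
    apply Measurable.mul
    · apply Measurable.mul
      · exact (measurable_const.indicator Metric.isOpen_ball.measurableSet).sub humeas
      · fun_prop
    · exact ((Real.measurable_log.comp ((measurable_const.sub measurable_id).norm)).const_mul
        (-2)).pow_const _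
  have hball : IntegrableOn f (Metric.ball x 1) := by
    have hω0 : ∀ r : ℝ, 0 < r → 0 ≤ ω r := fun r hr => by
      have := hω r hr x (by simp [dist_self]; linarith)
      simpa using this
    set h : ℝ → ℝ := fun r => ω r / r * (1 - Real.log r) ^ (m - 1) with hh
    obtain ⟨h', h'sm, hhh⟩ := hDini.1
    have h'meas : Measurable h' := h'sm.measurable
    have hnull : volume ({r : ℝ | h r ≠ h' r} ∩ Set.Ioc 0 1) = 0 := by
      have h0 := ae_iff.1 hhh
      rwa [Measure.restrict_apply' measurableSet_Ioc] at h0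
    obtain ⟨D, hDsub, hDmeas, hDnull⟩ := exists_measurable_superset_of_null hnull
    have hbad : volume {y : EuclideanSpace ℝ (Fin N) | ‖x - y‖ ∈ D} = 0 := by
      have h0 : volume {z : EuclideanSpace ℝ (Fin N) | ‖z‖ ∈ D} = 0 :=
        norm_preimage_null hN hDmeas (measure_mono_null Set.inter_subset_left hDnull)
      have hset : {y : EuclideanSpace ℝ (Fin N) | ‖x - y‖ ∈ D} =
          (MeasurableEquiv.subLeft x) ⁻¹' {z : EuclideanSpace ℝ (Fin N) | ‖z‖ ∈ D} := rfl
      rw [hset]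
      show volume (⇑(MeasurableEquiv.subLeft x) ⁻¹' (Norm.norm ⁻¹' D)) = 0
      rw [← Measure.map_apply (MeasurableEquiv.subLeft x).measurable
        (measurable_norm hDmeas),
        show ⇑(MeasurableEquiv.subLeft x) = fun t => x - t from rfl,
        Measure.map_sub_left_eq_self volume x]
      exact h0
    constructor
    · exact hfm.aestronglyMeasurable.restrict
    · rw [hasFiniteIntegral_iff_norm]
      set G : ℝ → ℝ≥0∞ := Set.indicator (Set.Ioo (0:ℝ) 1) (fun r =>
        ENNReal.ofReal ((2:ℝ) ^ (m-1)) * ENNReal.ofReal (h' r) *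
          ENNReal.ofReal (r ^ (1 - (N:ℝ)))) with hG
      have hGmeas : Measurable G := by
        apply Measurable.indicator _ measurableSet_Ioo
        fun_prop
      have hbound : ∀ᵐ y ∂(volume : Measure (EuclideanSpace ℝ (Fin N))),
          y ∈ Metric.ball x 1 → ENNReal.ofReal ‖f y‖ ≤ G ‖x - y‖ := by
        have hae : ∀ᵐ y ∂(volume : Measure (EuclideanSpace ℝ (Fin N))), ‖x - y‖ ∉ D := by
          rw [ae_iff]
          simpa using hbad
        filter_upwards [hae] with y hyD hyball
        by_cases hyx : y = x
        · have : f y = 0 := by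
            rw [hf, hyx]
            simp [Set.indicator_of_mem (Metric.mem_ball_self one_pos)]
          simp [this]
        · set r : ℝ := ‖x - y‖ with hr
          have hr0 : (0:ℝ) < r := by
            rw [hr, norm_pos_iff]
            exact sub_ne_zero.2 (Ne.symm hyx)
          have hr1 : r < 1 := by
            rw [hr, ← dist_eq_norm, dist_comm]
            exact Metric.mem_ball.1 hyball
          have hrIoo : r ∈ Set.Ioo (0:ℝ) 1 := ⟨hr0, hr1⟩
          have hheq : h r = h' r := by
            by_contra hne
            exact hyD (hDsub ⟨hne, hr0, hr1.le⟩)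
          have hlog : Real.log r < 0 := Real.log_neg hr0 hr1
          have hω0r := hω0 r hr0
          have hhr_nonneg : 0 ≤ h r :=
            mul_nonneg (div_nonneg hω0r hr0.le) (pow_nonneg (by linarith) _)
          rw [hG, Set.indicator_of_mem hrIoo, ← hheq,
            ← ENNReal.ofReal_mul (by positivity),
            ← ENNReal.ofReal_mul (mul_nonneg (by positivity) hhr_nonneg)]
          apply ENNReal.ofReal_le_ofReal
          have hrw : (2:ℝ)^(m-1) * h r * r^(1-(N:ℝ)) =
              ω r * r^(-(N:ℝ)) * (2*(1 - Real.log r))^(m-1) := by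
            have hrr : r⁻¹ * r^(1-(N:ℝ)) = r^(-(N:ℝ)) := by
              rw [← Real.rpow_neg_one r, ← Real.rpow_add hr0,
                show (-1 + (1 - (N:ℝ))) = -(N:ℝ) by ring]
            calc (2:ℝ)^(m-1) * (ω r / r * (1-Real.log r)^(m-1)) * r^(1-(N:ℝ))
                = ω r * (r⁻¹ * r^(1-(N:ℝ))) * ((2:ℝ)^(m-1) * (1-Real.log r)^(m-1)) := by
                  rw [div_eq_mul_inv]; ring
              _ = ω r * r^(-(N:ℝ)) * (2*(1 - Real.log r))^(m-1) := by
                  rw [hrr, ← mul_pow]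
          rw [hrw]
          have hfy : ‖f y‖ = |u x - u y| * r ^ (-(N:ℝ)) * (-2 * Real.log r)^(m-1) := by
            rw [hf]
            simp only [Set.indicator_of_mem hyball]
            rw [Real.norm_eq_abs, abs_mul, abs_mul,
              abs_of_nonneg (Real.rpow_nonneg (norm_nonneg _) _), abs_pow,
              abs_of_nonneg (by nlinarith : (0:ℝ) ≤ -2 * Real.log r)]
          rw [hfy]
          have h1 : |u x - u y| ≤ ω r := by
            rw [abs_sub_comm]
            refine hω r hr0 y (le_of_eq ?_)
            rw [dist_eq_norm, norm_sub_rev]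
          have h2 : (-2 * Real.log r)^(m-1) ≤ (2*(1 - Real.log r))^(m-1) :=
            pow_le_pow_left₀ (by nlinarith) (by nlinarith) _
          refine mul_le_mul (mul_le_mul h1 le_rfl (Real.rpow_nonneg hr0.le _) hω0r) h2
            (pow_nonneg (by nlinarith) _) ?_
          exact mul_nonneg hω0r (Real.rpow_nonneg hr0.le _)
      calc ∫⁻ y in Metric.ball x 1, ENNReal.ofReal ‖f y‖
          ≤ ∫⁻ y in Metric.ball x 1, G ‖x - y‖ :=
            lintegral_mono_ae ((ae_restrict_iff' Metric.isOpen_ball.measurableSet).2 hbound)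
        _ ≤ ∫⁻ y, G ‖x - y‖ := setLIntegral_le_lintegral _ _
        _ = ∫⁻ y, G ‖y‖ := by
            calc ∫⁻ y, G ‖x - y‖
                = ∫⁻ y, G ‖y‖ ∂(volume.map (MeasurableEquiv.subLeft x)) :=
                  (lintegral_map_equiv (fun y => G ‖y‖) (MeasurableEquiv.subLeft x)).symm
              _ = ∫⁻ y, G ‖y‖ := by
                  rw [show ⇑(MeasurableEquiv.subLeft x) = fun t => x - t from rfl,
                    Measure.map_sub_left_eq_self volume x]
        _ = volume.toSphere Set.univ * ∫⁻ r in Set.Ioi (0:ℝ), ENNReal.ofReal (r^(N-1)) * G r :=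
            lintegral_norm_polar hN G hGmeas
        _ < ⊤ := by
            refine ENNReal.mul_lt_top (measure_lt_top _ _) ?_
            have hone : ∀ r : ℝ, 0 < r → r < 1 → (r:ℝ)^(N-1:ℕ) * r^(1-(N:ℝ)) = 1 := by
              intro r hr0 _
              rw [← Real.rpow_natCast r (N-1), ← Real.rpow_add hr0]
              have : ((N-1:ℕ):ℝ) + (1-(N:ℝ)) = 0 := by
                push_cast [Nat.cast_sub hN]
                ring
              rw [this, Real.rpow_zero]
            have hsimp : ∀ r ∈ Set.Ioi (0:ℝ), ENNReal.ofReal (r ^ (N-1)) * G r =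
                (Set.Ioo (0:ℝ) 1).indicator
                  (fun r => ENNReal.ofReal ((2:ℝ)^(m-1)) * ENNReal.ofReal (h' r)) r := by
              intro r _
              by_cases hrI : r ∈ Set.Ioo (0:ℝ) 1
              · rw [hG, Set.indicator_of_mem hrI, Set.indicator_of_mem hrI]
                calc ENNReal.ofReal (r^(N-1)) * (ENNReal.ofReal ((2:ℝ)^(m-1)) *
                      ENNReal.ofReal (h' r) * ENNReal.ofReal (r^(1-(N:ℝ))))
                    = (ENNReal.ofReal ((2:ℝ)^(m-1)) * ENNReal.ofReal (h' r)) *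
                      (ENNReal.ofReal (r^(N-1:ℕ)) * ENNReal.ofReal (r^(1-(N:ℝ)))) := by ring
                  _ = ENNReal.ofReal ((2:ℝ)^(m-1)) * ENNReal.ofReal (h' r) := by
                      rw [← ENNReal.ofReal_mul (pow_nonneg hrI.1.le _), hone r hrI.1 hrI.2,
                        ENNReal.ofReal_one, mul_one]
              · rw [hG, Set.indicator_of_notMem hrI, Set.indicator_of_notMem hrI, mul_zero]
            have hIoo : Set.Ioo (0:ℝ) 1 ∩ Set.Ioi 0 = Set.Ioo 0 1 :=
              Set.inter_eq_left.2 fun r hr => hr.1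
            rw [setLIntegral_congr_fun measurableSet_Ioi hsimp,
              lintegral_indicator measurableSet_Ioo, Measure.restrict_restrict measurableSet_Ioo,
              hIoo, lintegral_const_mul' _ _ ENNReal.ofReal_ne_top]
            refine ENNReal.mul_lt_top ENNReal.ofReal_lt_top ?_
            have heq2 : ∫⁻ r in Set.Ioo (0:ℝ) 1, ENNReal.ofReal (h' r) =
                ∫⁻ r in Set.Ioo (0:ℝ) 1, ENNReal.ofReal (h r) := by
              apply lintegral_congr_ae
              have hsub := ae_restrict_of_ae_restrict_of_subset Set.Ioo_subset_Ioc_self hhh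
              filter_upwards [hsub] with r hr
              rw [hr]
            rw [heq2]
            calc ∫⁻ r in Set.Ioo (0:ℝ) 1, ENNReal.ofReal (h r)
                ≤ ∫⁻ r in Set.Ioc (0:ℝ) 1, ENNReal.ofReal (h r) :=
                  lintegral_mono_set Set.Ioo_subset_Ioc_self
              _ ≤ ∫⁻ r in Set.Ioc (0:ℝ) 1, ENNReal.ofReal ‖h r‖ :=
                  lintegral_mono fun r => ENNReal.ofReal_le_ofReal
                    (by rw [Real.norm_eq_abs]; exact le_abs_self _)
              _ < ⊤ := (hasFiniteIntegral_iff_norm _).1 hDini.2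
  have hcompl : IntegrableOn f (Metric.ball x 1)ᶜ := by
    set C : ℝ := (2 + ‖x‖) ^ N * (2 * Real.log (1 + ‖x‖) + 2) ^ (m - 1) with hC
    refine Integrable.mono' ((hL1.const_mul C).integrableOn)
      (hfm.aestronglyMeasurable.restrict)
      (((ae_restrict_iff' Metric.isOpen_ball.measurableSet.compl).2
        (Filter.Eventually.of_forall fun y hy => ?_)))
    set r : ℝ := ‖x - y‖ with hr
    have hr1 : 1 ≤ r := by
      have := (Metric.mem_ball.not.1 hy)
      rw [hr, ← dist_eq_norm, dist_comm]
      linarith [not_lt.1 this]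
    have hr0 : (0:ℝ) < r := by linarith
    have hlr0 : 0 ≤ Real.log r := Real.log_nonneg hr1
    set L1 : ℝ := Real.log (1 + ‖x‖) with hL1d
    set L2 : ℝ := Real.log (Real.exp 1 + ‖y‖) with hL2d
    have hL1n : 0 ≤ L1 := Real.log_nonneg (by linarith [norm_nonneg x])
    have hL2n : 1 ≤ L2 := by
      rw [hL2d, ← Real.log_exp 1]
      exact Real.log_le_log (Real.exp_pos 1) (by rw [Real.exp_log (Real.exp_pos 1)]; linarith [norm_nonneg y])
    have hexp : (2.7:ℝ) < Real.exp 1 := by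
      have := Real.exp_one_gt_d9; linarith
    have hlogr : Real.log r ≤ L1 + L2 := by
      rw [hL1d, hL2d, ← Real.log_mul (by positivity) (by positivity)]
      refine Real.log_le_log hr0 ?_
      have h1 : r ≤ ‖x‖ + ‖y‖ := norm_sub_le x y
      nlinarith [norm_nonneg x, norm_nonneg y]
    -- compute the norm of f y
    have hind : (Metric.ball x 1).indicator (fun _ => u x) y = 0 :=
      Set.indicator_of_notMem hy _
    have hnormf : ‖f y‖ = |u y| * r ^ (-(N:ℝ)) * (2 * Real.log r) ^ (m - 1) := by
      rw [hf]
      simp only [hind, zero_sub, Real.norm_eq_abs, abs_mul]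
      rw [abs_neg, abs_of_nonneg (Real.rpow_nonneg (norm_nonneg _) _), abs_pow]
      congr 2
      rw [abs_mul]
      simp [← hr, abs_of_nonneg hlr0]
    -- key bounds
    have hA : r ^ (-(N:ℝ)) ≤ (2 + ‖x‖) ^ N * (1 + ‖y‖) ^ (-(N:ℝ)) := by
      have h1y : 1 + ‖y‖ ≤ (2 + ‖x‖) * r := by
        have h2 : ‖y‖ - ‖x‖ ≤ r := by
          rw [hr, norm_sub_rev]; exact norm_sub_norm_le y x
        nlinarith [norm_nonneg x]
      have heq : r ^ (-(N:ℝ)) = (2 + ‖x‖) ^ N * ((2 + ‖x‖) * r) ^ (-(N:ℝ)) := by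
        rw [Real.mul_rpow (by positivity) hr0.le, ← Real.rpow_natCast (2 + ‖x‖) N,
          ← mul_assoc, ← Real.rpow_add (by positivity)]
        simp
      rw [heq]
      exact mul_le_mul_of_nonneg_left
        (Real.rpow_le_rpow_of_nonpos (by positivity) h1y (neg_nonpos.2 (Nat.cast_nonneg N)))
        (by positivity)
    have hB : (2 * Real.log r) ^ (m - 1) ≤ (2 * L1 + 2) ^ (m - 1) * L2 ^ (m - 1) := by
      rw [← mul_pow]
      refine pow_le_pow_left₀ (by linarith) ?_ _
      nlinarith
    rw [hnormf]
    calc |u y| * r ^ (-(N:ℝ)) * (2 * Real.log r) ^ (m - 1)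
        ≤ |u y| * ((2 + ‖x‖) ^ N * (1 + ‖y‖) ^ (-(N:ℝ))) *
            ((2 * L1 + 2) ^ (m - 1) * L2 ^ (m - 1)) := by
          refine mul_le_mul (mul_le_mul le_rfl hA (by positivity) (abs_nonneg _)) hB
            (by positivity) ?_
          have : (0:ℝ) ≤ (1 + ‖y‖) ^ (-(N:ℝ)) := by positivity
          positivity
      _ = C * (|u y| * (1 + ‖y‖) ^ (-(N:ℝ)) * L2 ^ (m - 1)) := by ring
  have := hball.union hcompl
  rwa [Set.union_compl_self, integrableOn_univ] at this
end
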